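/- arXiv:1802.10012 — 3 statements merged into one kernel-verified Lean document; each statement's English description precedes it below -/
import Mathlib

section
/- Let a be a non-zero squarefree integer, K = Q(√a), and suppose the narrow class group of K is trivial. Let N be a positive integer all of whose prime factors are non-inert (i.e., split or ramified) in O_K. Then there exist integers x, y with N_K(x, y) = N, where N_K(x, y) = x² − xy + ((1−a)/4)y² if a ≡ 1 (mod 4) and N_K(x, y) = x² − a y² otherwise. -/
/-!
A non-inert prime `p` has a prime ideal of norm `p` above it, so there is an integral ideal `I`
of norm `N`. As the narrow class group is trivial, `I = (β)` with `N(β) > 0`, hence `N(β) = N`.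
Writing `β = q + r α`, the trace `s = 2q` is an integer, and then so is `t = 2r`, because `a t²`
is an integer and `a` is squarefree; thus `s² - a t² = 4N`. Reducing modulo `4` shows that
`s ≡ t (mod 2)` if `a ≡ 1 (mod 4)` and that `s` and `t` are even otherwise, which gives `x` and
`y` with `N_K(x, y) = N`.
-/

open scoped nonZeroDivisors

section QuadraticExtension

variable {F L : Type*} [Field F] [Field L] [Algebra F L] {d : F} {α : L}

theorem linearIndependent_one_of_sq_eq (hα : α ^ 2 = algebraMap F L d) (hd : ¬IsSquare d) :
    LinearIndependent F ![1, α] := by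
  rw [LinearIndependent.pair_iff]
  intro q r hqr
  by_cases hr : r = 0
  · subst hr
    simpa using hqr
  · refine absurd ⟨-q / r, ?_⟩ hd
    apply (algebraMap F L).injective
    have : algebraMap F L r * α = -algebraMap F L q := by
      rw [Algebra.smul_def, Algebra.smul_def, mul_one] at hqr
      linear_combination hqr
    have hr' : algebraMap F L r ≠ 0 := by simpa using hr
    rw [← hα, map_mul, map_div₀, map_neg]
    field_simp
    linear_combination (algebraMap F L r * α - algebraMap F L q) * this

noncomputable def basisOneSqrt (hL : Module.finrank F L = 2) (hα : α ^ 2 = algebraMap F L d)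
    (hd : ¬IsSquare d) : Module.Basis (Fin 2) F L :=
  basisOfLinearIndependentOfCardEqFinrank (linearIndependent_one_of_sq_eq hα hd) (by simp [hL])

theorem coe_basisOneSqrt (hL : Module.finrank F L = 2) (hα : α ^ 2 = algebraMap F L d)
    (hd : ¬IsSquare d) : ⇑(basisOneSqrt hL hα hd) = ![1, α] :=
  coe_basisOfLinearIndependentOfCardEqFinrank _ _

theorem basisOneSqrt_equivFun (hL : Module.finrank F L = 2) (hα : α ^ 2 = algebraMap F L d)
    (hd : ¬IsSquare d) (q r : F) :
    (basisOneSqrt hL hα hd).equivFun (q • 1 + r • α) = ![q, r] := by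
  rw [← LinearEquiv.eq_symm_apply, Module.Basis.equivFun_symm_apply, Fin.sum_univ_two,
    coe_basisOneSqrt]
  rfl

theorem leftMulMatrix_basisOneSqrt (hL : Module.finrank F L = 2) (hα : α ^ 2 = algebraMap F L d)
    (hd : ¬IsSquare d) (q r : F) :
    Algebra.leftMulMatrix (basisOneSqrt hL hα hd) (q • 1 + r • α) = !![q, d * r; r, q] := by
  have hmul : (q • 1 + r • α) * α = (d * r) • 1 + q • α := by
    simp only [Algebra.smul_def, mul_one, map_mul]
    linear_combination algebraMap F L r * hα
  ext i j
  rw [Algebra.leftMulMatrix_eq_repr_mul, ← Module.Basis.equivFun_apply, coe_basisOneSqrt]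
  fin_cases j
  · simp only [Fin.zero_eta, Matrix.cons_val_zero, mul_one, basisOneSqrt_equivFun]
    fin_cases i <;> rfl
  · simp only [Fin.mk_one, Matrix.cons_val_one, Matrix.cons_val_zero, hmul, basisOneSqrt_equivFun]
    fin_cases i <;> rfl

theorem norm_smul_one_add_smul (hL : Module.finrank F L = 2) (hα : α ^ 2 = algebraMap F L d)
    (hd : ¬IsSquare d) (q r : F) : Algebra.norm F (q • 1 + r • α) = q ^ 2 - d * r ^ 2 := by
  rw [Algebra.norm_eq_matrix_det (basisOneSqrt hL hα hd), leftMulMatrix_basisOneSqrt,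
    Matrix.det_fin_two_of]
  ring

theorem trace_smul_one_add_smul (hL : Module.finrank F L = 2) (hα : α ^ 2 = algebraMap F L d)
    (hd : ¬IsSquare d) (q r : F) : Algebra.trace F L (q • 1 + r • α) = 2 * q := by
  rw [Algebra.trace_eq_matrix_trace (basisOneSqrt hL hα hd), leftMulMatrix_basisOneSqrt,
    Matrix.trace_fin_two_of]
  ring

theorem exists_eq_smul_one_add_smul (hL : Module.finrank F L = 2) (hα : α ^ 2 = algebraMap F L d)
    (hd : ¬IsSquare d) (β : L) : ∃ q r : F, β = q • 1 + r • α := by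
  refine ⟨(basisOneSqrt hL hα hd).repr β 0, (basisOneSqrt hL hα hd).repr β 1, ?_⟩
  conv_lhs => rw [← (basisOneSqrt hL hα hd).sum_repr β]
  rw [Fin.sum_univ_two, coe_basisOneSqrt]
  rfl

end QuadraticExtension

theorem Int.not_isSquare_of_squarefree {a : ℤ} (ha : Squarefree a) (ha1 : a ≠ 1) :
    ¬IsSquare a := by
  rintro ⟨r, rfl⟩
  rcases Int.isUnit_iff.mp (ha r dvd_rfl) with rfl | rfl <;> simp at ha1

theorem Squarefree.exists_intCast_eq_of_mul_sq {a m : ℤ} (ha : Squarefree a) {t : ℚ}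
    (h : a * t ^ 2 = m) : ∃ u : ℤ, (u : ℚ) = t := by
  have key : a * t.num ^ 2 = t.den ^ 2 * m := by
    rw [← Rat.num_div_den t] at h
    field_simp at h
    exact_mod_cast h
  have hcop : IsCoprime (t.den : ℤ) t.num :=
    Int.isCoprime_iff_gcd_eq_one.mpr (by simpa [Int.gcd, Nat.coprime_comm] using t.reduced)
  have hden : (t.den : ℤ) * t.den ∣ a := by
    rw [← sq]
    exact hcop.pow.dvd_of_dvd_mul_right ⟨m, key⟩
  have hden1 : t.den = 1 := by simpa [Int.isUnit_iff_natAbs_eq] using ha _ hden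
  exact ⟨t.num, Rat.coe_int_num_of_den_eq_one hden1⟩

theorem two_mul_add_eq_zero_of_sq_eq_sq_zmod_four :
    ∀ s t : ZMod 4, s ^ 2 = t ^ 2 → 2 * (s + t) = 0 := by
  decide

theorem two_mul_eq_zero_of_sq_eq_mul_sq_zmod_four :
    ∀ a s t : ZMod 4, a = 2 ∨ a = 3 → s ^ 2 = a * t ^ 2 → 2 * s = 0 ∧ 2 * t = 0 := by
  decide

theorem two_dvd_of_two_mul_intCast_eq_zero_zmod_four {x : ℤ} (h : 2 * (x : ZMod 4) = 0) :
    2 ∣ x := by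
  have : (4 : ℤ) ∣ 2 * x := (ZMod.intCast_zmod_eq_zero_iff_dvd _ 4).mp (by push_cast; exact h)
  omega

def quadraticNormForm (a x y : ℤ) : ℤ :=
  if a % 4 = 1 then x ^ 2 - x * y + ((1 - a) / 4) * y ^ 2 else x ^ 2 - a * y ^ 2

theorem exists_quadraticNormForm_eq {a s t n : ℤ} (ha : Squarefree a)
    (h : s ^ 2 - a * t ^ 2 = 4 * n) : ∃ x y, quadraticNormForm a x y = n := by
  have hmod : (s : ZMod 4) ^ 2 = ((a % 4 : ℤ) : ZMod 4) * (t : ZMod 4) ^ 2 := by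
    have := (ZMod.intCast_zmod_eq_zero_iff_dvd _ 4).mpr ⟨n, h⟩
    rw [show ((a % 4 : ℤ) : ZMod 4) = a by exact_mod_cast ZMod.intCast_mod a 4]
    push_cast at this
    linear_combination this
  have ha4 : ¬4 ∣ a := fun h4 => by
    simpa [Int.isUnit_iff] using ha 2 (by simpa using h4)
  unfold quadraticNormForm
  by_cases h1 : a % 4 = 1
  · rw [h1, Int.cast_one, one_mul] at hmod
    obtain ⟨x, hx⟩ := two_dvd_of_two_mul_intCast_eq_zero_zmod_four (x := s + t)
      (by push_cast; exact two_mul_add_eq_zero_of_sq_eq_sq_zmod_four _ _ hmod)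
    have hc : (1 - a) / 4 * 4 = 1 - a := Int.ediv_mul_cancel (by omega)
    refine ⟨x, t, ?_⟩
    rw [if_pos h1]
    exact mul_left_cancel₀ four_ne_zero
      (by linear_combination t ^ 2 * hc - (2 * x + s - t) * hx + h)
  · have h23 : ((a % 4 : ℤ) : ZMod 4) = 2 ∨ ((a % 4 : ℤ) : ZMod 4) = 3 := by
      rcases (by omega : a % 4 = 2 ∨ a % 4 = 3) with h | h <;> simp [h]
    obtain ⟨hs, ht⟩ := two_mul_eq_zero_of_sq_eq_mul_sq_zmod_four _ _ _ h23 hmod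
    obtain ⟨x, rfl⟩ := two_dvd_of_two_mul_intCast_eq_zero_zmod_four hs
    obtain ⟨y, rfl⟩ := two_dvd_of_two_mul_intCast_eq_zero_zmod_four ht
    refine ⟨x, y, ?_⟩
    rw [if_neg h1]
    exact mul_left_cancel₀ four_ne_zero (by linear_combination h)

section NumberField

open NumberField

variable {K : Type*} [Field K] [NumberField K]

theorem exists_absNorm_eq_prime_of_not_isPrime (hK : Module.finrank ℚ K = 2) {p : ℕ}
    (hp : p.Prime) (h : ¬(Ideal.span {(p : 𝓞 K)}).IsPrime) :
    ∃ P : Ideal (𝓞 K), Ideal.absNorm P = p := by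
  set J := Ideal.span {(p : 𝓞 K)}
  have hJ : Ideal.absNorm J = p ^ 2 := by
    rw [Ideal.absNorm_span_singleton, Algebra.norm_natCast, RingOfIntegers.rank, hK]
    simp
  have hJtop : J ≠ ⊤ := fun htop => by
    rw [htop, Ideal.absNorm_top] at hJ
    nlinarith [hp.two_le]
  obtain ⟨P, hP, hJP⟩ := J.exists_le_maximal hJtop
  obtain ⟨C, hC⟩ := Ideal.dvd_iff_le.mpr hJP
  refine ⟨P, ((hp.mul_eq_prime_sq_iff (y := Ideal.absNorm C) ?_ ?_).mp ?_).1⟩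
  · exact mt Ideal.absNorm_eq_one_iff.mp hP.ne_top
  · intro hC1
    rw [Ideal.absNorm_eq_one_iff.mp hC1, Ideal.mul_top] at hC
    exact h (hC ▸ hP.isPrime)
  · rw [← map_mul, ← hC, hJ]

theorem exists_absNorm_eq (hK : Module.finrank ℚ K = 2) {n : ℕ} (hn : n ≠ 0)
    (hfac : ∀ p : ℕ, p.Prime → p ∣ n → ¬(Ideal.span {(p : 𝓞 K)}).IsPrime) :
    ∃ I : Ideal (𝓞 K), Ideal.absNorm I = n := by
  suffices n ∈ MonoidHom.mrange (Ideal.absNorm : Ideal (𝓞 K) →*₀ ℕ) from this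
  rw [← Nat.prod_primeFactorsList hn]
  refine Submonoid.list_prod_mem _ fun p hp => ?_
  exact exists_absNorm_eq_prime_of_not_isPrime hK (Nat.prime_of_mem_primeFactorsList hp)
    (hfac p (Nat.prime_of_mem_primeFactorsList hp) (Nat.dvd_of_mem_primeFactorsList hp))

theorem exists_norm_eq_absNorm_of_coeIdeal_eq_spanSingleton {I : Ideal (𝓞 K)} {β : K}
    (hI : (I : FractionalIdeal (𝓞 K)⁰ K) = FractionalIdeal.spanSingleton _ β)
    (hβ : 0 < Algebra.norm ℚ β) : ∃ b : 𝓞 K, Algebra.norm ℤ b = Ideal.absNorm I := by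
  obtain ⟨b, -, rfl⟩ :=
    (FractionalIdeal.mem_coeIdeal _).mp (hI ▸ FractionalIdeal.mem_spanSingleton_self _ β)
  refine ⟨b, ?_⟩
  have := FractionalIdeal.coeIdeal_absNorm (K := K) I
  rw [hI, FractionalIdeal.absNorm_span_singleton, abs_of_pos hβ] at this
  have hb : (Algebra.norm ℤ b : ℚ) = Ideal.absNorm I := (Algebra.coe_norm_int b).trans this
  exact_mod_cast hb

theorem exists_sq_sub_mul_sq_eq_four_mul_norm {a : ℤ} (ha : Squarefree a) (ha1 : a ≠ 1)
    (hK : Module.finrank ℚ K = 2) {α : K} (hα : α ^ 2 = (a : K)) (β : 𝓞 K) :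
    ∃ s t : ℤ, s ^ 2 - a * t ^ 2 = 4 * Algebra.norm ℤ β := by
  have hd : ¬IsSquare (a : ℚ) := by
    rw [Rat.isSquare_intCast_iff]
    exact Int.not_isSquare_of_squarefree ha ha1
  have hα' : α ^ 2 = algebraMap ℚ K a := by simpa using hα
  obtain ⟨q, r, hqr⟩ := exists_eq_smul_one_add_smul hK hα' hd (β : K)
  have hnorm : (Algebra.norm ℤ β : ℚ) = q ^ 2 - a * r ^ 2 := by
    rw [Algebra.coe_norm_int, hqr, norm_smul_one_add_smul hK hα' hd]
  have htrace : (Algebra.trace ℤ (𝓞 K) β : ℚ) = 2 * q := by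
    rw [Algebra.coe_trace_int, hqr, trace_smul_one_add_smul hK hα' hd]
  set s := Algebra.trace ℤ (𝓞 K) β
  obtain ⟨t, ht⟩ := ha.exists_intCast_eq_of_mul_sq (t := 2 * r)
    (m := s ^ 2 - 4 * Algebra.norm ℤ β) (by push_cast; rw [htrace, hnorm]; ring)
  refine ⟨s, t, ?_⟩
  have : (s : ℚ) ^ 2 - a * t ^ 2 = 4 * Algebra.norm ℤ β := by
    rw [ht, htrace, hnorm]
    ring
  exact_mod_cast this

end NumberField

open NumberField in
theorem stmt_10_general (a : ℤ) (ha : Squarefree a)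
    (K : Type*) [Field K] [NumberField K]
    (hK : Module.finrank ℚ K = 2) (α : K) (hα : α ^ 2 = (a : K))
    (htriv : ∀ I : FractionalIdeal (𝓞 K)⁰ K, I ≠ 0 →
      ∃ β : K, 0 < Algebra.norm ℚ β ∧ I = FractionalIdeal.spanSingleton (𝓞 K)⁰ β)
    (N : ℤ) (hN : 0 < N)
    (hfac : ∀ p : ℕ, p.Prime → (p : ℤ) ∣ N → ¬ (Ideal.span {(p : 𝓞 K)}).IsPrime) :
    ∃ x y : ℤ, (if a % 4 = 1 then x ^ 2 - x * y + ((1 - a) / 4) * y ^ 2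
      else x ^ 2 - a * y ^ 2) = N := by
  by_cases ha1 : a = 1
  · subst ha1
    exact ⟨N, N - 1, by norm_num; ring⟩
  obtain ⟨I, hI⟩ := exists_absNorm_eq hK (n := N.natAbs) (by omega)
    fun p hp hpN => hfac p hp (Int.natCast_dvd.mpr hpN)
  have hI0 : (I : FractionalIdeal (𝓞 K)⁰ K) ≠ 0 :=
    FractionalIdeal.coeIdeal_ne_zero.mpr fun h => by simp [h] at hI; omega
  obtain ⟨β, hβ, hIβ⟩ := htriv I hI0
  obtain ⟨b, hb⟩ := exists_norm_eq_absNorm_of_coeIdeal_eq_spanSingleton hIβ hβ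
  obtain ⟨s, t, hst⟩ := exists_sq_sub_mul_sq_eq_four_mul_norm ha ha1 hK hα b
  rw [hb, hI, Int.natAbs_of_nonneg hN.le] at hst
  exact exists_quadraticNormForm_eq ha hst

open NumberField in
theorem stmt_10 (a : ℤ) (ha0 : a ≠ 0) (ha : Squarefree a)
    (K : Type*) [Field K] [NumberField K]
    (hK : Module.finrank ℚ K = 2) (α : K) (hα : α ^ 2 = (a : K))
    (htriv : ∀ I : FractionalIdeal (𝓞 K)⁰ K, I ≠ 0 →
      ∃ β : K, 0 < Algebra.norm ℚ β ∧ I = FractionalIdeal.spanSingleton (𝓞 K)⁰ β)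
    (N : ℤ) (hN : 0 < N)
    (hfac : ∀ p : ℕ, p.Prime → (p : ℤ) ∣ N → ¬ (Ideal.span {(p : 𝓞 K)}).IsPrime) :
    ∃ x y : ℤ, (if a % 4 = 1 then x ^ 2 - x * y + ((1 - a) / 4) * y ^ 2
      else x ^ 2 - a * y ^ 2) = N :=
  stmt_10_general a ha K hK α hα htriv N hN hfac
end

section
/- Let a be a non-zero squarefree integer, K = Q(√a), and h the order of its narrow class group Cl⁺(K). Let S be a finite set of rational primes none of which is inert in O_K, and let p_1, …, p_{h−1} be split primes of Z not in S, with prime ideals 𝔭_j of O_K above p_j, such that the classes [𝔭_1], …, [𝔭_{h−1}] are exactly the distinct non-trivial elements of Cl⁺(K). If the equation N_K(x, y) = p_1 ⋯ p_{h−1} · ∏_{p ∈ S} p has a solution with x, y ∈ Q, then it has a solution with x, y ∈ Z. -/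
/-!
Let `N = p₁ ⋯ p_{h-1} ∏_{q ∈ S} q` and `I₀ = 𝔭₁ ⋯ 𝔭_{h-1} ∏_{q ∈ S} 𝔔_q`, where `𝔔_q` is a prime
of norm `q` (it exists because `q` is not inert), so that `N(I₀) = N`. Clearing denominators in a
rational solution gives `γ ∈ 𝓞 K` of norm `d²N > 0`. In a quadratic field an ideal of square norm
is of the form `J² (m)`, so its narrow class is a square; applied to `I₀ (γ)` this gives
`[I₀] = s²`. If `s ≠ 1` then `s = [𝔭_k]`, and replacing `𝔭_k` by its conjugate (of class `s⁻¹`)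
gives an ideal of norm `N` and trivial narrow class, i.e. `(γ₁)` with `N(γ₁) = N`. Finally an
algebraic integer `γ₁ = u + v√a` has `2u = Tr γ₁ ∈ ℤ` and `a (2v)² ∈ ℤ`, hence `2v ∈ ℤ` as `a`
is squarefree, and a computation mod `4` turns `(2u, 2v)` into integral coordinates in the basis
`{1, ω}`.
-/

open scoped nonZeroDivisors
open NumberField

/-- The narrow class group of a number field: fractional ideals modulo principal
fractional ideals generated by an element of positive norm. -/
noncomputable abbrev narrowClassGroup (K : Type*) [Field K] [NumberField K] : Type _ :=
  (FractionalIdeal (𝓞 K)⁰ K)ˣ ⧸ Subgroup.closure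
    {u : (FractionalIdeal (𝓞 K)⁰ K)ˣ | ∃ β : K, 0 < Algebra.norm ℚ β ∧
      (u : FractionalIdeal (𝓞 K)⁰ K) = FractionalIdeal.spanSingleton (𝓞 K)⁰ β}

/-- The class of a nonzero integral ideal in the narrow class group. -/
noncomputable def narrowClassGroup.mk0 (K : Type*) [Field K] [NumberField K]
    (I : (Ideal (𝓞 K))⁰) : narrowClassGroup K :=
  QuotientGroup.mk (FractionalIdeal.mk0 K I)

/-- `N_K(x, y)`, written over any commutative ring so that it covers the rational and the
integral equation (see `exists_norm_eq_normForm`). -/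
def normForm {R : Type*} [CommRing R] (a : ℤ) (x y : R) : R :=
  if a % 4 = 1 then x ^ 2 - x * y + (((1 - a) / 4 : ℤ) : R) * y ^ 2 else x ^ 2 - (a : R) * y ^ 2

theorem Rat.den_eq_one_of_squarefree_mul_sq {a : ℤ} (ha : Squarefree a) {w : ℚ} {c : ℤ}
    (h : a * w ^ 2 = c) : w.den = 1 := by
  have h' : a * w.num ^ 2 = (w.den : ℤ) ^ 2 * c := by
    rw [← Rat.num_div_den w] at h
    field_simp at h
    exact_mod_cast h
  have hcop : IsCoprime ((w.den : ℤ) ^ 2) (w.num ^ 2) := by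
    refine IsCoprime.pow (Int.isCoprime_iff_gcd_eq_one.mpr ?_)
    simpa [Int.gcd, Nat.coprime_comm] using w.reduced
  have hunit := ha (w.den : ℤ) (by rw [← sq]; exact hcop.dvd_of_dvd_mul_right ⟨c, h'⟩)
  simpa using Int.isUnit_iff_natAbs_eq.mp hunit

theorem ZMod.parity_of_sq_sub_mul_sq_eq_zero :
    ∀ t s c : ZMod 4, t ^ 2 - c * s ^ 2 = 0 →
      (c = 1 → 2 * (t + s) = 0) ∧ (c = 2 ∨ c = 3 → 2 * t = 0 ∧ 2 * s = 0) := by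
  decide

theorem Int.two_dvd_of_two_mul_cast_eq_zero {z : ℤ} (h : 2 * (z : ZMod 4) = 0) : 2 ∣ z := by
  have : (4 : ℤ) ∣ 2 * z := (ZMod.intCast_zmod_eq_zero_iff_dvd _ 4).mp (by push_cast; exact h)
  omega

theorem exists_normForm_eq_of_sq_sub_mul_sq_eq {a t s M : ℤ} (ha : Squarefree a)
    (h : t ^ 2 - a * s ^ 2 = 4 * M) : ∃ x y : ℤ, normForm a x y = M := by
  have hmod := ZMod.parity_of_sq_sub_mul_sq_eq_zero t s a <| by
    exact_mod_cast (congrArg (Int.cast : ℤ → ZMod 4) h).trans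
      (by push_cast; exact mul_eq_zero_of_left rfl _)
  have hcast : (a : ZMod 4) = ((a % 4 : ℤ) : ZMod 4) := by
    exact_mod_cast (ZMod.intCast_mod a 4).symm
  have ha4 : a % 4 ≠ 0 := fun h0 ↦ by
    have := Int.isUnit_iff.mp (ha 2 (by omega))
    omega
  unfold normForm
  split_ifs with ha1
  · obtain ⟨x, hx⟩ := Int.two_dvd_of_two_mul_cast_eq_zero (z := t + s) <| by
      push_cast; exact hmod.1 (by rw [hcast, ha1]; rfl)
    have hq : 4 * ((1 - a) / 4) = 1 - a := by omega
    refine ⟨x, s, mul_left_cancel₀ (four_ne_zero (α := ℤ)) ?_⟩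
    linear_combination (t + s + 2 * x - 2 * s) * hx.symm + s ^ 2 * hq + h
  · obtain ⟨ht, hs⟩ := hmod.2 <| by
      rcases (by omega : a % 4 = 2 ∨ a % 4 = 3) with ha' | ha' <;> rw [hcast, ha'] <;> simp
    obtain ⟨x, rfl⟩ := Int.two_dvd_of_two_mul_cast_eq_zero ht
    obtain ⟨y, rfl⟩ := Int.two_dvd_of_two_mul_cast_eq_zero hs
    exact ⟨x, y, mul_left_cancel₀ (four_ne_zero (α := ℤ)) (by linear_combination h)⟩

section QuadraticField

variable {K : Type*} [Field K] [CharZero K] {α : K}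

theorem notMem_range_algebraMap_of_sq_eq {a : ℤ} (ha : Squarefree a) (ha1 : a ≠ 1)
    (hα : α ^ 2 = a) : α ∉ Set.range (algebraMap ℚ K) := by
  rintro ⟨r, rfl⟩
  have hr : r ^ 2 = a := (algebraMap ℚ K).injective (by rw [map_pow, hα, map_intCast])
  obtain ⟨m, rfl⟩ := Rat.isSquare_intCast_iff.mp ⟨r, by rw [← hr, sq]⟩
  rcases Int.isUnit_iff.mp (ha m dvd_rfl) with rfl | rfl <;> simp at ha1

theorem exists_basis_one_of_notMem_range (hK : Module.finrank ℚ K = 2)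
    (hα : α ∉ Set.range (algebraMap ℚ K)) :
    ∃ b : Module.Basis (Fin 2) ℚ K, b 0 = 1 ∧ b 1 = α := by
  have hli : LinearIndependent ℚ ![(1 : K), α] := by
    rw [LinearIndependent.pair_iff]
    intro s t hst
    have ht : t = 0 := by
      by_contra ht
      refine hα ⟨-s / t, ?_⟩
      rw [Algebra.smul_def, Algebra.smul_def, mul_one] at hst
      rw [map_div₀, map_neg, div_eq_iff (by simpa using ht)]
      linear_combination -hst
    subst ht
    simpa using hst
  exact ⟨basisOfLinearIndependentOfCardEqFinrank hli (by simp [hK]), by simp, by simp⟩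

theorem leftMulMatrix_algebraMap_add_mul {a : ℚ} (hα : α ^ 2 = algebraMap ℚ K a)
    {b : Module.Basis (Fin 2) ℚ K} (hb0 : b 0 = 1) (hb1 : b 1 = α) (u v : ℚ) :
    Algebra.leftMulMatrix b (algebraMap ℚ K u + algebraMap ℚ K v * α) = !![u, a * v; v, u] := by
  have h0 : (algebraMap ℚ K u + algebraMap ℚ K v * α) * b 0 = u • b 0 + v • b 1 := by
    simp [hb0, hb1, Algebra.smul_def]
  have h1 : (algebraMap ℚ K u + algebraMap ℚ K v * α) * b 1 = (a * v) • b 0 + u • b 1 := by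
    simp only [hb0, hb1, Algebra.smul_def, map_mul]
    linear_combination algebraMap ℚ K v * hα
  ext i j
  rw [Algebra.leftMulMatrix_eq_repr_mul]
  fin_cases j
  · rw [Fin.zero_eta, h0]; fin_cases i <;> simp
  · rw [Fin.mk_one, h1]; fin_cases i <;> simp

theorem norm_algebraMap_add_mul {a : ℚ} (hα : α ^ 2 = algebraMap ℚ K a)
    {b : Module.Basis (Fin 2) ℚ K} (hb0 : b 0 = 1) (hb1 : b 1 = α) (u v : ℚ) :
    Algebra.norm ℚ (algebraMap ℚ K u + algebraMap ℚ K v * α) = u ^ 2 - a * v ^ 2 := by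
  rw [Algebra.norm_eq_matrix_det b, leftMulMatrix_algebraMap_add_mul hα hb0 hb1,
    Matrix.det_fin_two_of]
  ring

theorem trace_algebraMap_add_mul {a : ℚ} (hα : α ^ 2 = algebraMap ℚ K a)
    {b : Module.Basis (Fin 2) ℚ K} (hb0 : b 0 = 1) (hb1 : b 1 = α) (u v : ℚ) :
    Algebra.trace ℚ K (algebraMap ℚ K u + algebraMap ℚ K v * α) = 2 * u := by
  rw [Algebra.trace_eq_matrix_trace b, leftMulMatrix_algebraMap_add_mul hα hb0 hb1,
    Matrix.trace_fin_two_of]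
  ring

theorem exists_norm_eq_normForm {a : ℤ} (hα : α ^ 2 = a) {b : Module.Basis (Fin 2) ℚ K}
    (hb0 : b 0 = 1) (hb1 : b 1 = α) (x y : ℚ) : ∃ β : K, Algebra.norm ℚ β = normForm a x y := by
  have hα' : α ^ 2 = algebraMap ℚ K a := by rw [hα, map_intCast]
  unfold normForm
  split_ifs with ha
  · refine ⟨algebraMap ℚ K (x - y / 2) + algebraMap ℚ K (-(y / 2)) * α, ?_⟩
    have hq : 4 * (((1 - a) / 4 : ℤ) : ℚ) = 1 - a := by
      exact_mod_cast (show 4 * ((1 - a) / 4) = 1 - a by omega)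
    rw [norm_algebraMap_add_mul hα' hb0 hb1]
    linear_combination (-(y ^ 2) / 4) * hq
  · exact ⟨algebraMap ℚ K x + algebraMap ℚ K y * α, norm_algebraMap_add_mul hα' hb0 hb1 x y⟩

theorem exists_normForm_eq_norm [NumberField K] {a : ℤ} (ha : Squarefree a) (hα : α ^ 2 = a)
    {b : Module.Basis (Fin 2) ℚ K} (hb0 : b 0 = 1) (hb1 : b 1 = α) (γ : 𝓞 K) :
    ∃ x y : ℤ, normForm a x y = Algebra.norm ℤ γ := by
  have hα' : α ^ 2 = algebraMap ℚ K a := by rw [hα, map_intCast]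
  obtain ⟨u, v, huv⟩ : ∃ u v : ℚ, (γ : K) = algebraMap ℚ K u + algebraMap ℚ K v * α := by
    refine ⟨b.repr γ 0, b.repr γ 1, ?_⟩
    conv_lhs => rw [← b.sum_repr γ]
    simp [Fin.sum_univ_two, hb0, hb1, Algebra.smul_def]
  have htrace : (Algebra.trace ℤ (𝓞 K) γ : ℚ) = 2 * u := by
    rw [Algebra.coe_trace_int, huv, trace_algebraMap_add_mul hα' hb0 hb1]
  have hnorm : (Algebra.norm ℤ γ : ℚ) = u ^ 2 - a * v ^ 2 := by
    rw [Algebra.coe_norm_int, huv, norm_algebraMap_add_mul hα' hb0 hb1]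
  have hden := Rat.den_eq_one_of_squarefree_mul_sq ha (w := 2 * v)
    (c := Algebra.trace ℤ (𝓞 K) γ ^ 2 - 4 * Algebra.norm ℤ γ)
    (by push_cast; rw [htrace, hnorm]; ring)
  have hs : ((2 * v).num : ℚ) = 2 * v := Rat.coe_int_num_of_den_eq_one hden
  refine exists_normForm_eq_of_sq_sub_mul_sq_eq ha (t := Algebra.trace ℤ (𝓞 K) γ)
    (s := (2 * v).num) ?_
  have : ((Algebra.trace ℤ (𝓞 K) γ : ℚ)) ^ 2 - a * ((2 * v).num : ℚ) ^ 2 =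
      4 * (Algebra.norm ℤ γ : ℚ) := by
    rw [htrace, hs, hnorm]; ring
  exact_mod_cast this

theorem exists_norm_eq_pow_finrank_mul [NumberField K] {β : K} {M : ℤ}
    (hβ : Algebra.norm ℚ β = M) :
    ∃ d : ℤ, d ≠ 0 ∧ ∃ γ : 𝓞 K, Algebra.norm ℤ γ = d ^ Module.finrank ℚ K * M := by
  obtain ⟨d, hd, hint⟩ := ((IsFractionRing.isAlgebraic_iff ℤ ℚ K).mpr
    (Algebra.IsAlgebraic.isAlgebraic β)).exists_integral_multiple
  let γ : 𝓞 K := ⟨d • β, hint⟩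
  refine ⟨d, hd, γ, ?_⟩
  have : (Algebra.norm ℤ γ : ℚ) = d ^ Module.finrank ℚ K * M := by
    rw [Algebra.coe_norm_int, show (γ : K) = d • β from rfl, ← Int.cast_smul_eq_zsmul ℚ,
      Algebra.smul_def, map_mul, Algebra.norm_algebraMap, hβ]
  exact_mod_cast this

end QuadraticField

namespace narrowClassGroup

variable (K : Type*) [Field K] [NumberField K]

def positivePrincipal : Subgroup (FractionalIdeal (𝓞 K)⁰ K)ˣ where
  carrier := {u : (FractionalIdeal (𝓞 K)⁰ K)ˣ | ∃ β : K, 0 < Algebra.norm ℚ β ∧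
    (u : FractionalIdeal (𝓞 K)⁰ K) = FractionalIdeal.spanSingleton (𝓞 K)⁰ β}
  mul_mem' := by
    rintro u v ⟨β, hβ, hu⟩ ⟨γ, hγ, hv⟩
    exact ⟨β * γ, by rw [map_mul]; positivity, by
      rw [Units.val_mul, hu, hv, FractionalIdeal.spanSingleton_mul_spanSingleton]⟩
  one_mem' := ⟨1, by simp, by simp⟩
  inv_mem' := by
    rintro u ⟨β, hβ, hu⟩
    refine ⟨β⁻¹, by rw [Algebra.norm_inv]; positivity, ?_⟩
    rw [Units.val_inv_eq_inv_val, hu, FractionalIdeal.spanSingleton_inv]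

/-- Instance search does not find this structure on the quotient by itself. -/
noncomputable abbrev commGroup : CommGroup (narrowClassGroup K) :=
  QuotientGroup.Quotient.commGroup _

variable {K}

theorem mk0_mul (I J : (Ideal (𝓞 K))⁰) : mk0 K (I * J) = mk0 K I * mk0 K J := by
  simp only [mk0, map_mul, QuotientGroup.mk_mul]

theorem mk0_eq_one_iff (I : (Ideal (𝓞 K))⁰) :
    mk0 K I = 1 ↔ ∃ γ : 𝓞 K, 0 < Algebra.norm ℤ γ ∧ Ideal.span {γ} = I := by
  have hclosure : Subgroup.closure {u : (FractionalIdeal (𝓞 K)⁰ K)ˣ | ∃ β : K,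
      0 < Algebra.norm ℚ β ∧ (u : FractionalIdeal (𝓞 K)⁰ K) =
        FractionalIdeal.spanSingleton (𝓞 K)⁰ β} = positivePrincipal K :=
    Subgroup.closure_eq (positivePrincipal K)
  rw [mk0, QuotientGroup.eq_one_iff, hclosure]
  change (∃ β : K, _ ∧ _) ↔ _
  simp only [FractionalIdeal.coe_mk0]
  constructor
  · rintro ⟨β, hβ, hI⟩
    obtain ⟨γ, -, rfl⟩ := (FractionalIdeal.mem_coeIdeal _).mp
      (hI ▸ FractionalIdeal.mem_spanSingleton_self _ β)
    refine ⟨γ, by exact_mod_cast (Algebra.coe_norm_int γ).trans_gt hβ, ?_⟩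
    rw [← FractionalIdeal.coeIdeal_inj (K := K), FractionalIdeal.coeIdeal_span_singleton, hI]
  · rintro ⟨γ, hγ, hI⟩
    refine ⟨γ, by rw [← Algebra.coe_norm_int]; exact_mod_cast hγ, ?_⟩
    rw [← hI, FractionalIdeal.coeIdeal_span_singleton]

theorem exists_norm_eq_absNorm_of_mk0_eq_one {I : (Ideal (𝓞 K))⁰} (hI : mk0 K I = 1) :
    ∃ γ : 𝓞 K, Algebra.norm ℤ γ = Ideal.absNorm (I : Ideal (𝓞 K)) := by
  obtain ⟨γ, hγ, hspan⟩ := (mk0_eq_one_iff I).mp hI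
  refine ⟨γ, ?_⟩
  rw [← hspan, Ideal.absNorm_span_singleton, Int.natCast_natAbs, abs_of_pos hγ]

end narrowClassGroup

section Ideals

variable {K : Type*} [Field K] [NumberField K]

attribute [local instance] narrowClassGroup.commGroup

theorem absNorm_span_natCast_eq_sq (hK : Module.finrank ℚ K = 2) (n : ℕ) :
    Ideal.absNorm (Ideal.span {(n : 𝓞 K)}) = n ^ 2 := by
  rw [Ideal.absNorm_span_natCast, RingOfIntegers.rank, hK]

theorem absNorm_eq_of_span_natCast_eq_mul (hK : Module.finrank ℚ K = 2) {q : ℕ} (hq : q.Prime)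
    {P Q : Ideal (𝓞 K)} (hPQ : Ideal.span {(q : 𝓞 K)} = P * Q) (hP : P ≠ ⊤) (hQ : Q ≠ ⊤) :
    Ideal.absNorm P = q ∧ Ideal.absNorm Q = q := by
  refine (hq.mul_eq_prime_sq_iff ?_ ?_).mp ?_
  · rwa [Ne, Ideal.absNorm_eq_one_iff]
  · rwa [Ne, Ideal.absNorm_eq_one_iff]
  · rw [← map_mul, ← hPQ, absNorm_span_natCast_eq_sq hK]

theorem exists_absNorm_eq_of_not_isPrime (hK : Module.finrank ℚ K = 2) {q : ℕ} (hq : q.Prime)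
    (hnp : ¬ (Ideal.span {(q : 𝓞 K)}).IsPrime) :
    ∃ P : (Ideal (𝓞 K))⁰, Ideal.absNorm (P : Ideal (𝓞 K)) = q := by
  have hq1 : Ideal.span {(q : 𝓞 K)} ≠ ⊤ := by
    rw [← Ideal.absNorm_eq_one_iff.ne, absNorm_span_natCast_eq_sq hK]
    exact (Nat.one_lt_pow two_ne_zero hq.one_lt).ne'
  obtain ⟨P, hP, hqP⟩ := Ideal.exists_le_maximal _ hq1
  obtain ⟨Q, hPQ⟩ := Ideal.dvd_iff_le.mpr hqP
  have hQ : Q ≠ ⊤ := by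
    rintro rfl
    exact hnp (by rw [hPQ, Ideal.mul_top]; exact hP.isPrime)
  have hPq := (absNorm_eq_of_span_natCast_eq_mul hK hq hPQ hP.ne_top hQ).1
  refine ⟨⟨P, Ideal.absNorm_ne_zero_iff_mem_nonZeroDivisors.mp ?_⟩, hPq⟩
  rw [hPq]
  exact hq.ne_zero

theorem exists_absNorm_eq_prod_of_not_isPrime (hK : Module.finrank ℚ K = 2) {S : Finset ℕ}
    (hS : ∀ q ∈ S, q.Prime ∧ ¬ (Ideal.span {(q : 𝓞 K)}).IsPrime) :
    ∃ R : (Ideal (𝓞 K))⁰, Ideal.absNorm (R : Ideal (𝓞 K)) = ∏ q ∈ S, q :=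
  Finset.prod_induction _ (fun n ↦ ∃ R : (Ideal (𝓞 K))⁰, Ideal.absNorm (R : Ideal (𝓞 K)) = n)
    (fun _ _ ⟨R₁, h₁⟩ ⟨R₂, h₂⟩ ↦ ⟨R₁ * R₂, by rw [Submonoid.coe_mul, map_mul, h₁, h₂]⟩)
    ⟨1, by simp⟩ fun q hq ↦ exists_absNorm_eq_of_not_isPrime hK (hS q hq).1 (hS q hq).2

theorem not_dvd_absNorm_of_span_eq_mul {r : ℕ} (hr : r.Prime) {P Q J : Ideal (𝓞 K)}
    (hP : P.IsMaximal) (hQ : Q.IsMaximal) (hPQ : Ideal.span {(r : 𝓞 K)} = P * Q)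
    (hPJ : ¬ P ∣ J) (hQJ : ¬ Q ∣ J) : ¬ r ∣ Ideal.absNorm J := by
  intro hrJ
  obtain ⟨M, hM, hMr, hMJ⟩ := Ideal.exists_isMaximal_dvd_of_dvd_absNorm' hr J hrJ
  have hrM : M ∣ Ideal.span {(r : 𝓞 K)} := by
    rw [Ideal.dvd_iff_le, Ideal.span_singleton_le_iff_mem, ← map_natCast (algebraMap ℤ (𝓞 K)),
      ← Ideal.mem_under, hMr]
    exact Ideal.mem_span_singleton_self _
  have hMprime := Ideal.prime_of_isPrime (Ideal.IsMaximal.ne_bot_of_isIntegral_int M) hM.isPrime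
  rcases hMprime.dvd_or_dvd (hPQ ▸ hrM) with h | h
  · exact hPJ (hP.eq_of_le hM.ne_top (Ideal.le_of_dvd h) ▸ hMJ)
  · exact hQJ (hQ.eq_of_le hM.ne_top (Ideal.le_of_dvd h) ▸ hMJ)

theorem exists_eq_mul_of_absNorm_eq_sq (hK : Module.finrank ℚ K = 2) {I : Ideal (𝓞 K)}
    (hI0 : I ≠ ⊥) (hI1 : I ≠ ⊤) {n : ℕ} (hn : Ideal.absNorm I = n ^ 2) :
    ∃ r : ℕ, r.Prime ∧ ∃ I' : Ideal (𝓞 K), Ideal.absNorm I = r ^ 2 * Ideal.absNorm I' ∧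
      ((∃ P, I = P ^ 2 * I') ∨ I = Ideal.span {(r : 𝓞 K)} * I') := by
  obtain ⟨P, hP, hIP⟩ := Ideal.exists_le_maximal I hI1
  obtain ⟨r, -, -, hrP, hr, -⟩ := Ideal.exists_prime_and_absNorm_eq_pow P
  obtain ⟨I₁, rfl⟩ := Ideal.dvd_iff_le.mpr hIP
  by_cases hPr : P = Ideal.span {(r : 𝓞 K)}
  · subst hPr
    exact ⟨r, hr, I₁, by rw [map_mul, absNorm_span_natCast_eq_sq hK], Or.inr rfl⟩
  obtain ⟨Q, hrPQ⟩ : P ∣ Ideal.span {(r : 𝓞 K)} := by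
    rwa [Ideal.dvd_iff_le, Ideal.span_singleton_le_iff_mem]
  have hQ1 : Q ≠ ⊤ := by
    rintro rfl
    exact hPr (by rw [hrPQ, Ideal.mul_top])
  obtain ⟨hPnorm, hQnorm⟩ := absNorm_eq_of_span_natCast_eq_mul hK hr hrPQ hP.ne_top hQ1
  have hQ : Q.IsMaximal := by
    refine (Ideal.isPrime_of_irreducible_absNorm (hQnorm ▸ hr.prime.irreducible)).isMaximal ?_
    rintro rfl
    exact hr.ne_zero (by simpa using hQnorm.symm)
  by_cases hPI : P ∣ I₁
  · obtain ⟨I₂, rfl⟩ := hPI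
    exact ⟨r, hr, I₂, by rw [map_mul, map_mul, hPnorm]; ring, Or.inl ⟨P, by ring⟩⟩
  by_cases hQI : Q ∣ I₁
  · obtain ⟨I₂, rfl⟩ := hQI
    exact ⟨r, hr, I₂, by rw [map_mul, map_mul, hPnorm, hQnorm]; ring,
      Or.inr (by rw [hrPQ]; ring)⟩
  -- the `r`-part of the square `r * N(I₁)` would be odd
  refine absurd ?_ (not_dvd_absNorm_of_span_eq_mul hr hP hQ hrPQ hPI hQI)
  rw [map_mul, hPnorm] at hn
  obtain ⟨n', rfl⟩ := hr.dvd_of_dvd_pow (n := 2) (hn ▸ dvd_mul_right r _)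
  exact ⟨n' ^ 2, Nat.eq_of_mul_eq_mul_left hr.pos (by rw [hn]; ring)⟩

theorem exists_eq_sq_mul_span_natCast (hK : Module.finrank ℚ K = 2) {I : Ideal (𝓞 K)} {n : ℕ}
    (hI : Ideal.absNorm I = n ^ 2) :
    ∃ (J : Ideal (𝓞 K)) (m : ℕ), I = J ^ 2 * Ideal.span {(m : 𝓞 K)} := by
  induction n using Nat.strong_induction_on generalizing I with
  | _ n ih =>
  rcases eq_or_ne I ⊥ with rfl | hI0
  · exact ⟨⊤, 0, by simp⟩
  rcases eq_or_ne I ⊤ with rfl | hI1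
  · exact ⟨⊤, 1, by simp [Ideal.top_pow]⟩
  obtain ⟨r, hr, I', hII', hcases⟩ := exists_eq_mul_of_absNorm_eq_sq hK hI0 hI1 hI
  obtain ⟨n', rfl⟩ : r ∣ n :=
    hr.dvd_of_dvd_pow (n := 2) (hI ▸ hII' ▸ dvd_mul_of_dvd_left (dvd_pow_self r two_ne_zero) _)
  have hn' : n' ≠ 0 := by
    rintro rfl
    exact hI0 (Ideal.absNorm_eq_zero_iff.mp (by simpa using hI))
  obtain ⟨J, m, rfl⟩ := ih n' (lt_mul_left (Nat.pos_of_ne_zero hn') hr.one_lt)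
    (Nat.eq_of_mul_eq_mul_left (pow_pos hr.pos 2) (by rw [← hII', hI]; ring))
  rcases hcases with ⟨P, rfl⟩ | rfl
  · exact ⟨P * J, m, by ring⟩
  · exact ⟨J, r * m, by rw [Nat.cast_mul, ← Ideal.span_singleton_mul_span_singleton]; ring⟩

theorem isSquare_mk0_of_absNorm_eq_sq (hK : Module.finrank ℚ K = 2) (I : (Ideal (𝓞 K))⁰) {n : ℕ}
    (hI : Ideal.absNorm (I : Ideal (𝓞 K)) = n ^ 2) : IsSquare (narrowClassGroup.mk0 K I) := by
  obtain ⟨J, m, hJm⟩ := exists_eq_sq_mul_span_natCast hK hI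
  have hI0 : J ^ 2 * Ideal.span {(m : 𝓞 K)} ≠ 0 := hJm ▸ nonZeroDivisors.coe_ne_zero I
  have hJ : J ∈ (Ideal (𝓞 K))⁰ :=
    mem_nonZeroDivisors_of_ne_zero (pow_ne_zero_iff two_ne_zero |>.mp (left_ne_zero_of_mul hI0))
  have hm : Ideal.span {(m : 𝓞 K)} ∈ (Ideal (𝓞 K))⁰ :=
    mem_nonZeroDivisors_of_ne_zero (right_ne_zero_of_mul hI0)
  have hmcls : narrowClassGroup.mk0 K ⟨_, hm⟩ = 1 := by
    refine (narrowClassGroup.mk0_eq_one_iff _).mpr ⟨m, ?_, rfl⟩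
    have : m ≠ 0 := by
      rintro rfl
      simp at hm
    rw [Algebra.norm_natCast]
    positivity
  refine ⟨narrowClassGroup.mk0 K ⟨J, hJ⟩, ?_⟩
  rw [show I = ⟨J, hJ⟩ * ⟨J, hJ⟩ * ⟨_, hm⟩ from Subtype.ext (by simp [hJm, sq]),
    narrowClassGroup.mk0_mul, narrowClassGroup.mk0_mul, hmcls, mul_one]

theorem isSquare_mk0_of_norm_eq_sq_mul_absNorm (hK : Module.finrank ℚ K = 2)
    (I : (Ideal (𝓞 K))⁰) {γ : 𝓞 K} {d : ℤ} (hd : d ≠ 0)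
    (hγ : Algebra.norm ℤ γ = d ^ 2 * Ideal.absNorm (I : Ideal (𝓞 K))) :
    IsSquare (narrowClassGroup.mk0 K I) := by
  have hγpos : 0 < Algebra.norm ℤ γ := by
    rw [hγ]
    have := Ideal.absNorm_pos_of_nonZeroDivisors I
    positivity
  have hγ0 : Ideal.span {γ} ∈ (Ideal (𝓞 K))⁰ := by
    rw [← Ideal.absNorm_ne_zero_iff_mem_nonZeroDivisors, Ideal.absNorm_span_singleton]
    omega
  have hγcls : narrowClassGroup.mk0 K ⟨_, hγ0⟩ = 1 :=
    (narrowClassGroup.mk0_eq_one_iff _).mpr ⟨γ, hγpos, rfl⟩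
  have hsq := isSquare_mk0_of_absNorm_eq_sq hK (I * ⟨_, hγ0⟩)
    (n := d.natAbs * Ideal.absNorm (I : Ideal (𝓞 K))) <| by
      rw [Submonoid.coe_mul, map_mul, Ideal.absNorm_span_singleton, hγ]
      zify
      rw [abs_of_pos (by rwa [← hγ]), mul_pow, sq_abs]
      ring
  rwa [narrowClassGroup.mk0_mul, hγcls, mul_one] at hsq

theorem exists_norm_eq_absNorm_of_isSquare_mk0 (hK : Module.finrank ℚ K = 2) {ι : Type*}
    (𝔭 : ι → (Ideal (𝓞 K))⁰) (p : ι → ℕ) (hp : ∀ j, (p j).Prime)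
    (hsplit : ∀ j, (𝔭 j : Ideal (𝓞 K)).IsPrime ∧
      ∃ 𝔮 : Ideal (𝓞 K), 𝔮.IsPrime ∧ Ideal.span {(p j : 𝓞 K)} = 𝔭 j * 𝔮)
    (hcl : ∀ c : narrowClassGroup K, c ≠ 1 → ∃ j, narrowClassGroup.mk0 K (𝔭 j) = c)
    (I : (Ideal (𝓞 K))⁰) (hI : ∀ j, (𝔭 j : Ideal (𝓞 K)) ∣ I)
    (hsq : IsSquare (narrowClassGroup.mk0 K I)) :
    ∃ γ : 𝓞 K, Algebra.norm ℤ γ = Ideal.absNorm (I : Ideal (𝓞 K)) := by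
  obtain ⟨s, hs⟩ := hsq
  by_cases hs1 : s = 1
  · rw [hs1, one_mul] at hs
    exact narrowClassGroup.exists_norm_eq_absNorm_of_mk0_eq_one hs
  -- `[I] = [𝔭]²`, so replacing `𝔭` by its conjugate `𝔮` in `I` kills the class
  obtain ⟨k, rfl⟩ := hcl s hs1
  obtain ⟨h𝔭, 𝔮, h𝔮, hspan⟩ := hsplit k
  obtain ⟨R, hR⟩ := hI k
  have hspan0 : Ideal.span {(p k : 𝓞 K)} ∈ (Ideal (𝓞 K))⁰ := by
    rw [← Ideal.absNorm_ne_zero_iff_mem_nonZeroDivisors, absNorm_span_natCast_eq_sq hK]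
    exact pow_ne_zero 2 (hp k).ne_zero
  have h𝔮0 : 𝔮 ∈ (Ideal (𝓞 K))⁰ := by
    refine mem_nonZeroDivisors_of_ne_zero (right_ne_zero_of_mul (a := (𝔭 k : Ideal (𝓞 K))) ?_)
    rw [← hspan]
    exact nonZeroDivisors.coe_ne_zero ⟨_, hspan0⟩
  have hR0 : R ∈ (Ideal (𝓞 K))⁰ := by
    refine mem_nonZeroDivisors_of_ne_zero (right_ne_zero_of_mul (a := (𝔭 k : Ideal (𝓞 K))) ?_)
    rw [← hR]
    exact nonZeroDivisors.coe_ne_zero I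
  have hIR : I = 𝔭 k * ⟨R, hR0⟩ := Subtype.ext hR
  have h𝔭𝔮 : narrowClassGroup.mk0 K (𝔭 k) * narrowClassGroup.mk0 K ⟨𝔮, h𝔮0⟩ = 1 := by
    rw [← narrowClassGroup.mk0_mul, show 𝔭 k * ⟨𝔮, h𝔮0⟩ = ⟨_, hspan0⟩ from Subtype.ext hspan.symm]
    refine (narrowClassGroup.mk0_eq_one_iff _).mpr ⟨p k, ?_, rfl⟩
    rw [Algebra.norm_natCast]
    exact pow_pos (Nat.cast_pos.mpr (hp k).pos) _
  have hRcls : narrowClassGroup.mk0 K ⟨R, hR0⟩ = narrowClassGroup.mk0 K (𝔭 k) := by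
    rw [hIR, narrowClassGroup.mk0_mul] at hs
    exact mul_left_cancel hs
  obtain ⟨γ, hγ⟩ := narrowClassGroup.exists_norm_eq_absNorm_of_mk0_eq_one
    (I := ⟨𝔮, h𝔮0⟩ * ⟨R, hR0⟩) (by rw [narrowClassGroup.mk0_mul, hRcls, mul_comm, h𝔭𝔮])
  have hnorm := absNorm_eq_of_span_natCast_eq_mul hK (hp k) hspan h𝔭.ne_top h𝔮.ne_top
  refine ⟨γ, hγ.trans ?_⟩
  simp only [Submonoid.coe_mul, hR, map_mul, hnorm.1, hnorm.2]

end Ideals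

theorem stmt_11_general (a : ℤ) (ha : Squarefree a)
    (K : Type*) [Field K] [NumberField K]
    (hK : Module.finrank ℚ K = 2) (α : K) (hα : α ^ 2 = (a : K))
    (h : ℕ)
    -- a finite set of rational primes, none of which is inert in `𝓞 K`
    (S : Finset ℕ) (hS : ∀ q ∈ S, q.Prime ∧ ¬ (Ideal.span {(q : 𝓞 K)}).IsPrime)
    -- split primes `p j` not in `S`, with prime ideals `𝔭 j` above them
    (p : Fin (h - 1) → ℕ)
    (hpprime : ∀ j, (p j).Prime)
    (𝔭 : Fin (h - 1) → (Ideal (𝓞 K))⁰)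
    (hsplit : ∀ j, (𝔭 j : Ideal (𝓞 K)).IsPrime ∧
      ∃ 𝔮 : Ideal (𝓞 K), 𝔮.IsPrime ∧ 𝔮 ≠ (𝔭 j : Ideal (𝓞 K)) ∧
        Ideal.span {((p j : ℤ) : 𝓞 K)} = (𝔭 j : Ideal (𝓞 K)) * 𝔮)
    -- the classes of the `𝔭 j` are exactly the distinct non-trivial elements of `Cl⁺(K)`
    (hcl : ∀ c : narrowClassGroup K, c ≠ 1 ↔ ∃ j, narrowClassGroup.mk0 K (𝔭 j) = c)
    -- if the norm-form equation has a rational solution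
    (hrat : ∃ x y : ℚ, (if a % 4 = 1 then x ^ 2 - x * y + (((1 - a) / 4 : ℤ) : ℚ) * y ^ 2
        else x ^ 2 - (a : ℚ) * y ^ 2) =
      ((∏ j, (p j : ℤ)) * ∏ q ∈ S, (q : ℤ) : ℤ)) :
    -- then it has an integral solution
    ∃ x y : ℤ, (if a % 4 = 1 then x ^ 2 - x * y + ((1 - a) / 4) * y ^ 2
        else x ^ 2 - a * y ^ 2) =
      (∏ j, (p j : ℤ)) * ∏ q ∈ S, (q : ℤ) := by
  rcases eq_or_ne a 1 with rfl | ha1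
  · -- `x² - xy` represents every integer
    exact ⟨1, 1 - (∏ j, (p j : ℤ)) * ∏ q ∈ S, (q : ℤ), by norm_num⟩
  obtain ⟨b, hb0, hb1⟩ :=
    exists_basis_one_of_notMem_range hK (notMem_range_algebraMap_of_sq_eq ha ha1 hα)
  have hsplit' : ∀ j, (𝔭 j : Ideal (𝓞 K)).IsPrime ∧
      ∃ 𝔮 : Ideal (𝓞 K), 𝔮.IsPrime ∧ Ideal.span {(p j : 𝓞 K)} = 𝔭 j * 𝔮 := fun j ↦
    ⟨(hsplit j).1, (hsplit j).2.imp fun 𝔮 h𝔮 ↦ ⟨h𝔮.1, by simpa using h𝔮.2.2⟩⟩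
  have h𝔭 : ∀ j, Ideal.absNorm (𝔭 j : Ideal (𝓞 K)) = p j := fun j ↦
    have ⟨h𝔭, 𝔮, h𝔮, hspan⟩ := hsplit' j
    (absNorm_eq_of_span_natCast_eq_mul hK (hpprime j) hspan h𝔭.ne_top h𝔮.ne_top).1
  obtain ⟨R, hR⟩ := exists_absNorm_eq_prod_of_not_isPrime hK hS
  set I₀ : (Ideal (𝓞 K))⁰ := (∏ j, 𝔭 j) * R
  have hI₀ : (Ideal.absNorm (I₀ : Ideal (𝓞 K)) : ℤ) = (∏ j, (p j : ℤ)) * ∏ q ∈ S, (q : ℤ) := by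
    simp [I₀, map_prod, h𝔭, hR]
  obtain ⟨x, y, hxy⟩ := hrat
  obtain ⟨β, hβ⟩ := exists_norm_eq_normForm hα hb0 hb1 x y
  obtain ⟨d, hd, γ₀, hγ₀⟩ := exists_norm_eq_pow_finrank_mul (hβ.trans hxy)
  rw [hK] at hγ₀
  have hsq := isSquare_mk0_of_norm_eq_sq_mul_absNorm hK I₀ hd (hγ₀.trans (by rw [hI₀]))
  have h𝔭I₀ : ∀ j, (𝔭 j : Ideal (𝓞 K)) ∣ I₀ := fun j ↦ map_dvd (Submonoid.subtype _)
    (dvd_mul_of_dvd_left (Finset.dvd_prod_of_mem _ (Finset.mem_univ j)) R)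
  obtain ⟨γ, hγ⟩ := exists_norm_eq_absNorm_of_isSquare_mk0 hK 𝔭 p hpprime hsplit'
    (fun c hc ↦ (hcl c).mp hc) I₀ h𝔭I₀ hsq
  obtain ⟨x, y, hxy⟩ := exists_normForm_eq_norm ha hα hb0 hb1 γ
  exact ⟨x, y, by rw [← hI₀, ← hγ, ← hxy]; rfl⟩

theorem stmt_11 (a : ℤ) (ha0 : a ≠ 0) (ha : Squarefree a)
    (K : Type*) [Field K] [NumberField K]
    (hK : Module.finrank ℚ K = 2) (α : K) (hα : α ^ 2 = (a : K))
    (h : ℕ) (hh : Nat.card (narrowClassGroup K) = h)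
    -- a finite set of rational primes, none of which is inert in `𝓞 K`
    (S : Finset ℕ) (hS : ∀ q ∈ S, q.Prime ∧ ¬ (Ideal.span {(q : 𝓞 K)}).IsPrime)
    -- split primes `p j` not in `S`, with prime ideals `𝔭 j` above them
    (p : Fin (h - 1) → ℕ) (hpinj : Function.Injective p)
    (hpprime : ∀ j, (p j).Prime) (hpS : ∀ j, p j ∉ S)
    (𝔭 : Fin (h - 1) → (Ideal (𝓞 K))⁰)
    (hsplit : ∀ j, (𝔭 j : Ideal (𝓞 K)).IsPrime ∧
      ∃ 𝔮 : Ideal (𝓞 K), 𝔮.IsPrime ∧ 𝔮 ≠ (𝔭 j : Ideal (𝓞 K)) ∧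
        Ideal.span {((p j : ℤ) : 𝓞 K)} = (𝔭 j : Ideal (𝓞 K)) * 𝔮)
    -- the classes of the `𝔭 j` are exactly the distinct non-trivial elements of `Cl⁺(K)`
    (hclinj : Function.Injective fun j => narrowClassGroup.mk0 K (𝔭 j))
    (hcl : ∀ c : narrowClassGroup K, c ≠ 1 ↔ ∃ j, narrowClassGroup.mk0 K (𝔭 j) = c)
    -- if the norm-form equation has a rational solution
    (hrat : ∃ x y : ℚ, (if a % 4 = 1 then x ^ 2 - x * y + (((1 - a) / 4 : ℤ) : ℚ) * y ^ 2
        else x ^ 2 - (a : ℚ) * y ^ 2) =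
      ((∏ j, (p j : ℤ)) * ∏ q ∈ S, (q : ℤ) : ℤ)) :
    -- then it has an integral solution
    ∃ x y : ℤ, (if a % 4 = 1 then x ^ 2 - x * y + ((1 - a) / 4) * y ^ 2
        else x ^ 2 - a * y ^ 2) =
      (∏ j, (p j : ℤ)) * ∏ q ∈ S, (q : ℤ) :=
  stmt_11_general a ha K hK α hα h S hS p hpprime 𝔭 hsplit hcl hrat
end

section
/- Let a be a squarefree integer with a ≡ 2 or 3 (mod 4), K = Q(√a), and let J, J' be conjugate ideals of O_K with J·J' = (k)² for some non-zero integer k. Suppose every prime ideal dividing both J and J' is ramified over Q. Then J = 𝔨² for some ideal 𝔨 of O_K; in particular the class of J in the narrow class group of K is a square. -/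
/-!
For `a` squarefree with `a ≡ 2, 3 (mod 4)`, `ℤ[√a]` is integrally closed: an element `p + q√a`
of `ℚ(√a)` integral over `ℤ` has integral trace `2p` and norm `p² - aq²`, and reducing
`(2p)² - a(2q)² ≡ 0 (mod 4)` forces `p, q ∈ ℤ`. So `ℤ[√a]` is a Dedekind domain, and `J` is a
square as soon as every prime occurs in `J` to an even exponent. From `J J' = (k)²`, a prime `𝔭`
dividing `J` but not `J'` has `v_𝔭(J) = 2 v_𝔭(k)`. A prime dividing both is ramified, `𝔭² = (p)`,
hence fixed by conjugation; then `v_𝔭(J) = v_𝔭(J') = v_𝔭(k) = 2 v_p(k)`.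
-/

theorem Int.two_dvd_of_four_dvd_sq_sub_mul_sq {d x y : ℤ} (hd : d % 4 = 2 ∨ d % 4 = 3)
    (h : 4 ∣ x ^ 2 - d * y ^ 2) : 2 ∣ x ∧ 2 ∣ y := by
  have key : ∀ D X Y : ZMod 4, (D = 2 ∨ D = 3) → X ^ 2 - D * Y ^ 2 = 0 → 2 * X = 0 ∧ 2 * Y = 0 := by
    decide
  have hD : (d : ZMod 4) = 2 ∨ (d : ZMod 4) = 3 := by
    rw [← ZMod.intCast_mod d 4]
    rcases hd with hd | hd <;> simp [hd]
  have hxy := (ZMod.intCast_zmod_eq_zero_iff_dvd _ 4).2 h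
  push_cast at hxy
  obtain ⟨hx, hy⟩ := key _ _ _ hD hxy
  have hx' := (ZMod.intCast_zmod_eq_zero_iff_dvd (2 * x) 4).1 (by exact_mod_cast hx)
  have hy' := (ZMod.intCast_zmod_eq_zero_iff_dvd (2 * y) 4).1 (by exact_mod_cast hy)
  omega

theorem Rat.exists_intCast_eq_of_squarefree_mul_sq {d : ℤ} (hd : Squarefree d) {t : ℚ} {z : ℤ}
    (h : d * t ^ 2 = z) : ∃ n : ℤ, (n : ℚ) = t := by
  refine ⟨t.num, (Rat.den_eq_one_iff t).mp ?_⟩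
  have hcross : d * t.num ^ 2 = (t.den : ℤ) ^ 2 * z := by
    rw [← Rat.num_div_den t] at h
    field_simp at h
    exact_mod_cast h
  have hcop : IsCoprime (t.den : ℤ) t.num :=
    (Int.isCoprime_iff_gcd_eq_one (m := t.num) (n := t.den)).mpr t.reduced |>.symm
  have hden_sq : (t.den : ℤ) ^ 2 ∣ d := hcop.pow.dvd_of_dvd_mul_right ⟨z, hcross⟩
  have := Int.isUnit_iff.mp (hd _ (by rwa [← sq]))
  omega

theorem Rat.exists_intCast_eq_of_two_mul_of_sq_sub_mul_sq {d : ℤ} (hd : Squarefree d)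
    (hd4 : d % 4 = 2 ∨ d % 4 = 3) {p q : ℚ} {P N : ℤ} (hP : (P : ℚ) = 2 * p)
    (hN : (N : ℚ) = p ^ 2 - d * q ^ 2) : (∃ x : ℤ, (x : ℚ) = p) ∧ ∃ y : ℤ, (y : ℚ) = q := by
  obtain ⟨Q, hQ⟩ := Rat.exists_intCast_eq_of_squarefree_mul_sq hd (t := 2 * q) (z := P ^ 2 - 4 * N)
    (by push_cast; rw [hP, hN]; ring)
  have hrel : P ^ 2 - d * Q ^ 2 = 4 * N := by
    have : ((P ^ 2 - d * Q ^ 2 : ℤ) : ℚ) = (4 * N : ℤ) := by push_cast; rw [hP, hQ, hN]; ring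
    exact_mod_cast this
  obtain ⟨⟨x, rfl⟩, ⟨y, rfl⟩⟩ := Int.two_dvd_of_four_dvd_sq_sub_mul_sq hd4 ⟨N, hrel⟩
  exact ⟨⟨x, by push_cast at hP; linarith⟩, ⟨y, by push_cast at hQ; linarith⟩⟩

namespace QuadraticAlgebra

theorem exists_intCast_eq_trace_and_norm_of_isIntegral {a b : ℚ} {x : QuadraticAlgebra ℚ a b}
    (hx : IsIntegral ℤ x) : (∃ n : ℤ, (n : ℚ) = trace x) ∧ ∃ n : ℤ, (n : ℚ) = norm x := by
  have hstar : IsIntegral ℤ (star x) := hx.map (starRingEnd _).toIntAlgHom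
  have hrat : ∀ r : ℚ, IsIntegral ℤ (algebraMap ℚ (QuadraticAlgebra ℚ a b) r) →
      ∃ n : ℤ, (n : ℚ) = r := fun r hr =>
    IsIntegrallyClosed.isIntegral_iff.mp <|
      (isIntegral_algHom_iff (algebraMap ℚ _).toIntAlgHom algebraMap_injective).mp hr
  exact ⟨hrat _ (by rw [algebraMap_trace_eq_add_star]; exact hx.add hstar),
    hrat _ (by rw [algebraMap_norm_eq_mul_star]; exact hx.mul hstar)⟩

theorem isIntegral_omega (a : ℤ) : IsIntegral ℤ (ω : QuadraticAlgebra ℚ a 0) :=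
  ⟨Polynomial.X ^ 2 - Polynomial.C a, Polynomial.monic_X_pow_sub_C _ two_ne_zero, by
    simp only [Polynomial.eval₂_sub, Polynomial.eval₂_X_pow, Polynomial.eval₂_C]
    ext <;> simp [sq]⟩

end QuadraticAlgebra

open UniqueFactorizationMonoid Ideal

theorem UniqueFactorizationMonoid.exists_associated_sq_of_mul_eq_sq {α : Type*}
    [CommMonoidWithZero α] [NormalizationMonoid α] [UniqueFactorizationMonoid α]
    [DecidableEq α] {x y z : α} (h : x * y = z ^ 2)
    (hcommon : ∀ p ∈ normalizedFactors x, p ∣ y → Even ((normalizedFactors x).count p)) :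
    ∃ w, Associated (w ^ 2) x := by
  by_cases hx : x = 0
  · exact ⟨0, by simp [hx]⟩
  have heven : ∀ p ∈ normalizedFactors x, 2 ∣ (normalizedFactors x).count p := by
    intro p hp
    by_cases hpy : p ∣ y
    · exact (hcommon p hp hpy).two_dvd
    have hy : y ≠ 0 := by rintro rfl; exact hpy (dvd_zero p)
    have hcount : (normalizedFactors x).count p + (normalizedFactors y).count p =
        2 * (normalizedFactors z).count p := by
      rw [← Multiset.count_add, ← normalizedFactors_mul hx hy, h, normalizedFactors_pow,
        Multiset.count_nsmul]
    have hpy' : (normalizedFactors y).count p = 0 :=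
      Multiset.count_eq_zero.mpr fun hm => hpy (dvd_of_mem_normalizedFactors hm)
    omega
  obtain ⟨u, hu⟩ := Multiset.exists_smul_of_dvd_count _ heven
  exact ⟨u.prod, by rw [← Multiset.prod_nsmul, ← hu]; exact prod_normalizedFactors hx⟩

theorem emultiplicity_map_eq_of_involutive {M F : Type*} [Monoid M] [FunLike F M M]
    [MonoidHomClass F M M] (f : F) (hf : Function.Involutive f) {a b : M} (ha : f a = a) :
    emultiplicity a (f b) = emultiplicity a b := by
  refine le_antisymm ?_ ?_
  · simpa [ha, hf b] using le_emultiplicity_map f (a := a) (b := f b)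
  · simpa [ha] using le_emultiplicity_map f (a := a) (b := b)

namespace Ideal

variable {R : Type*} [CommRing R] [IsDedekindDomain R]

theorem map_eq_self_of_sq_eq_span_intCast (σ : R →+* R) {P : Ideal R} {n : ℤ}
    (h : P ^ 2 = span {(n : R)}) : P.map σ = P := by
  have hsq : P.map σ ^ 2 = P ^ 2 := by
    rw [← Ideal.map_pow, h, map_span, Set.image_singleton, map_intCast]
  exact dvd_antisymm ((pow_dvd_pow_iff_dvd two_ne_zero).mp hsq.dvd)
    ((pow_dvd_pow_iff_dvd two_ne_zero).mp hsq.symm.dvd)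

theorem count_normalizedFactors_map_of_involutive [DecidableEq (Ideal R)] {σ : R →+* R}
    (hσ : Function.Involutive σ) {P J : Ideal R} (hP : Prime P) (hσP : P.map σ = P) :
    (normalizedFactors (J.map σ)).count P = (normalizedFactors J).count P := by
  by_cases hJ : J = ⊥
  · simp [hJ]
  have hJσ : J.map σ ≠ ⊥ := (map_eq_bot_iff_of_injective hσ.injective).not.mpr hJ
  have hinv : Function.Involutive (mapHom σ) := fun I => by
    rw [mapHom_apply, mapHom_apply, map_map, show σ.comp σ = RingHom.id R from RingHom.ext hσ,
      map_id]
  have := emultiplicity_map_eq_of_involutive (mapHom σ) hinv (b := J) hσP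
  rw [mapHom_apply, emultiplicity_eq_count_normalizedFactors hP.irreducible hJσ,
    emultiplicity_eq_count_normalizedFactors hP.irreducible hJ, normalize_eq] at this
  exact_mod_cast this

end Ideal

namespace Zsqrtd

open QuadraticAlgebra

variable {d : ℤ}

def toQuadraticAlgebra (d : ℤ) : ℤ√d →+* QuadraticAlgebra ℚ d 0 :=
  lift ⟨ω, by ext <;> simp [omega_mul_omega_eq_mk]⟩

instance : Algebra (ℤ√d) (QuadraticAlgebra ℚ d 0) := (toQuadraticAlgebra d).toAlgebra

theorem algebraMap_quadraticAlgebra (z : ℤ√d) :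
    algebraMap (ℤ√d) (QuadraticAlgebra ℚ d 0) z = ⟨z.re, z.im⟩ := by
  ext <;> simp [RingHom.algebraMap_toAlgebra, toQuadraticAlgebra]

theorem algebraMap_quadraticAlgebra_injective :
    Function.Injective (algebraMap (ℤ√d) (QuadraticAlgebra ℚ d 0)) := fun z w h => by
  simp only [algebraMap_quadraticAlgebra, QuadraticAlgebra.mk.injEq, Int.cast_inj] at h
  exact Zsqrtd.ext h.1 h.2

theorem isIntegralClosure_quadraticAlgebra (hd : Squarefree d) (hd4 : d % 4 = 2 ∨ d % 4 = 3) :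
    IsIntegralClosure (ℤ√d) ℤ (QuadraticAlgebra ℚ d 0) where
  algebraMap_injective := algebraMap_quadraticAlgebra_injective
  isIntegral_iff {x} := by
    refine ⟨fun hx => ?_, ?_⟩
    · obtain ⟨⟨P, hP⟩, ⟨N, hN⟩⟩ := exists_intCast_eq_trace_and_norm_of_isIntegral hx
      obtain ⟨⟨u, hu⟩, ⟨v, hv⟩⟩ := Rat.exists_intCast_eq_of_two_mul_of_sq_sub_mul_sq hd hd4
        (p := x.re) (q := x.im) (hP.trans (by rw [trace_def]; ring))
        (hN.trans (by rw [QuadraticAlgebra.norm_def]; ring))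
      exact ⟨⟨u, v⟩, by rw [algebraMap_quadraticAlgebra]; ext <;> simp [hu, hv]⟩
    · rintro ⟨z, rfl⟩
      have hz : algebraMap (ℤ√d) (QuadraticAlgebra ℚ d 0) z =
          (z.re : QuadraticAlgebra ℚ d 0) + (z.im : QuadraticAlgebra ℚ d 0) * ω := by
        rw [algebraMap_quadraticAlgebra]; ext <;> simp
      rw [hz]
      exact (isIntegral_intCast _).add ((isIntegral_intCast _).mul (isIntegral_omega d))

theorem isDedekindDomain (hd : Squarefree d) (hd4 : d % 4 = 2 ∨ d % 4 = 3) :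
    IsDedekindDomain (ℤ√d) := by
  -- makes `QuadraticAlgebra ℚ d 0` a field
  have : Fact (∀ r : ℚ, r ^ 2 ≠ d + 0 * r) := ⟨fun r hr => by
    obtain ⟨n, hn⟩ := Rat.isSquare_intCast_iff.mp ⟨r, by rw [← sq, hr, zero_mul, add_zero]⟩
    have := (Int.two_dvd_of_four_dvd_sq_sub_mul_sq hd4 (x := n) (y := 1) ⟨0, by rw [hn]; ring⟩).2
    omega⟩
  have := isIntegralClosure_quadraticAlgebra hd hd4
  have : IsDomain (ℤ√d) := algebraMap_quadraticAlgebra_injective.isDomain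
  exact IsIntegralClosure.isDedekindDomain ℤ ℚ (QuadraticAlgebra ℚ d 0) (ℤ√d)


section Ramification

variable [IsDedekindDomain (ℤ√d)] [DecidableEq (Ideal (ℤ√d))]

theorem even_count_normalizedFactors_span_intCast {P : Ideal (ℤ√d)} (hP : Prime P) {q : ℤ}
    (hq : Prime q) (hPq : P ^ 2 = span {(q : ℤ√d)}) {k : ℤ} (hk : k ≠ 0) :
    Even ((normalizedFactors (span {(k : ℤ√d)})).count P) := by
  obtain ⟨r, hkr, hqr⟩ := (Int.finiteMultiplicity_iff.mpr
    ⟨fun h => hq.not_isUnit (Int.isUnit_iff_natAbs_eq.mpr h), hk⟩).exists_eq_pow_mul_and_not_dvd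
  set m := multiplicity q k
  have hr : r ≠ 0 := by rintro rfl; simp [hk] at hkr
  have hspan : span {(k : ℤ√d)} = P ^ (2 * m) * span {(r : ℤ√d)} := by
    rw [hkr, Int.cast_mul, Int.cast_pow, ← span_singleton_mul_span_singleton, ← span_singleton_pow,
      ← hPq, ← pow_mul]
  have hPr : ¬ P ∣ span {(r : ℤ√d)} := fun h => by
    have h2 : span {(q : ℤ√d)} ∣ span {((r ^ 2 : ℤ) : ℤ√d)} := by
      rw [← hPq, Int.cast_pow, ← span_singleton_pow]; exact pow_dvd_pow_of_dvd h 2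
    rw [dvd_span_singleton, mem_span_singleton, intCast_dvd_intCast] at h2
    exact hqr (hq.dvd_of_dvd_pow h2)
  have hr0 : span {(r : ℤ√d)} ≠ 0 := by
    rw [Ne, zero_eq_bot, span_singleton_eq_bot]; exact_mod_cast hr
  rw [hspan, normalizedFactors_mul (pow_ne_zero _ hP.ne_zero) hr0, normalizedFactors_pow,
    normalizedFactors_irreducible hP.irreducible, normalize_eq, Multiset.count_add,
    Multiset.count_nsmul, Multiset.count_singleton_self,
    Multiset.count_eq_zero.mpr fun hm => hPr (dvd_of_mem_normalizedFactors hm)]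
  exact ⟨m, by ring⟩

theorem even_count_normalizedFactors_of_mul_conj_eq_sq {J : Ideal (ℤ√d)} {k : ℤ}
    (hJ : J * J.map (starRingEnd (ℤ√d)) = span {(k : ℤ√d)} ^ 2) {P : Ideal (ℤ√d)} (hP : Prime P)
    {q : ℤ} (hq : Prime q) (hPq : P ^ 2 = span {(q : ℤ√d)}) :
    Even ((normalizedFactors J).count P) := by
  by_cases hJ0 : J = 0
  · rw [hJ0, normalizedFactors_zero]
    exact ⟨0, rfl⟩
  have hJ'0 : J.map (starRingEnd (ℤ√d)) ≠ 0 :=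
    (map_eq_bot_iff_of_injective star_injective).not.mpr hJ0
  have hk : k ≠ 0 := by
    rintro rfl
    apply mul_ne_zero hJ0 hJ'0
    rw [hJ]
    simp
  have hconj := count_normalizedFactors_map_of_involutive (J := J)
    (σ := starRingEnd (ℤ√d)) (fun z => star_star z) hP
    (map_eq_self_of_sq_eq_span_intCast _ hPq)
  have hsum : (normalizedFactors J).count P + (normalizedFactors (J.map (starRingEnd _))).count P =
      2 * (normalizedFactors (span {(k : ℤ√d)})).count P := by
    rw [← Multiset.count_add, ← normalizedFactors_mul hJ0 hJ'0, hJ, normalizedFactors_pow,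
      Multiset.count_nsmul]
  obtain ⟨c, hc⟩ := even_count_normalizedFactors_span_intCast hP hq hPq hk
  exact ⟨c, by omega⟩

end Ramification

end Zsqrtd

theorem stmt_19_general (a : ℤ) (ha : Squarefree a) (ha4 : a % 4 = 2 ∨ a % 4 = 3)
    (k : ℤ)
    (J : Ideal (ℤ√a))
    (hJJ' : J * J.map (starRingEnd (ℤ√a)) = Ideal.span {(k : ℤ√a)} ^ 2)
    (hram : ∀ q : Ideal (ℤ√a), q.IsPrime → q ∣ J → q ∣ J.map (starRingEnd (ℤ√a)) →
      ∃ p : ℕ, p.Prime ∧ q ^ 2 = Ideal.span {((p : ℤ) : ℤ√a)}) :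
    ∃ 𝔨 : Ideal (ℤ√a), J = 𝔨 ^ 2 := by
  classical
  have := Zsqrtd.isDedekindDomain ha ha4
  obtain ⟨𝔨, h𝔨⟩ := exists_associated_sq_of_mul_eq_sq hJJ' fun P hP hPJ' => by
    have hPprime := prime_of_normalized_factor P hP
    obtain ⟨p, hp, hPp⟩ :=
      hram P (isPrime_of_prime hPprime) (dvd_of_mem_normalizedFactors hP) hPJ'
    exact Zsqrtd.even_count_normalizedFactors_of_mul_conj_eq_sq hJJ' hPprime
      (Nat.prime_iff_prime_int.mp hp) hPp
  exact ⟨𝔨, (associated_iff_eq.mp h𝔨).symm⟩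

theorem stmt_19 (a : ℤ) (ha : Squarefree a) (ha4 : a % 4 = 2 ∨ a % 4 = 3)
    (k : ℤ) (hk : k ≠ 0)
    (J : Ideal (ℤ√a))
    (hJJ' : J * J.map (starRingEnd (ℤ√a)) = Ideal.span {(k : ℤ√a)} ^ 2)
    (hram : ∀ q : Ideal (ℤ√a), q.IsPrime → q ∣ J → q ∣ J.map (starRingEnd (ℤ√a)) →
      ∃ p : ℕ, p.Prime ∧ q ^ 2 = Ideal.span {((p : ℤ) : ℤ√a)}) :
    ∃ 𝔨 : Ideal (ℤ√a), J = 𝔨 ^ 2 :=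
  stmt_19_general a ha ha4 k J hJJ' hram
end
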